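/- Under the hypotheses of the previous bijection, and assuming additionally that A is a topological group, O is compact open in A^T, and k^× is discrete, the map α : k_S^×\A_S → k^×\A/O is a homeomorphism (continuous, open, with continuous inverse) which is equivariant for the action of A_S by translation. -/

import Mathlib

/-!
Every class of `A / (K · O)` is represented by an element of `A_S`, because `A = K · A_S · O`;
two elements of `A_S` represent the same class exactly when their quotient lies in
`K_S = pr_S (K ∩ (A_S × O))`. Continuity is inherited from `s ↦ (s, 1)`, and the map is open
because the image of an open `U ⊆ A_S` is the image of the open set `U × O` in `A / (K · O)`.
-/

namespace QuotientGroup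

variable {G H : Type*} [Group G] [Group H]

theorem map_injective_of_comap_le (N : Subgroup G) [N.Normal] (M : Subgroup H) [M.Normal]
    (f : G →* H) (h : N ≤ M.comap f) (hMN : M.comap f ≤ N) :
    Function.Injective (map N M f h) := by
  rw [← MonoidHom.ker_eq_bot_iff, ker_map, Subgroup.map_eq_bot_iff, ker_mk']
  exact hMN

theorem continuous_map [TopologicalSpace G] [TopologicalSpace H] (N : Subgroup G) [N.Normal]
    (M : Subgroup H) [M.Normal] (f : G →* H) (hf : Continuous f) (h : N ≤ M.comap f) :
    Continuous (map N M f h) :=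
  (isQuotientMap_mk N).continuous_iff.2 (continuous_mk.comp hf)

end QuotientGroup

section Product

variable {G G' : Type*} [CommGroup G] [CommGroup G']

open MonoidHom

theorem comap_inl_sup_bot_prod_le (K : Subgroup (G × G')) (O : Subgroup G') :
    (K ⊔ (⊥ : Subgroup G).prod O).comap (inl G G') ≤
      (K ⊓ (⊤ : Subgroup G).prod O).map (fst G G') := by
  intro s hs
  obtain ⟨k, hk, n, hn, hkn⟩ := Subgroup.mem_sup.1 hs
  obtain ⟨hn₁, hn₂⟩ := Subgroup.mem_prod.1 hn
  have hk_eq : k = (s, n.2⁻¹) := by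
    rw [eq_mul_inv_of_mul_eq hkn]
    ext
    · simp [Subgroup.mem_bot.1 hn₁]
    · simp
  refine ⟨k, ⟨hk, Subgroup.mem_prod.2 ⟨trivial, ?_⟩⟩, by simp [hk_eq]⟩
  simpa [hk_eq] using O.inv_mem hn₂

theorem mk_comp_inl_surjective (K : Subgroup (G × G')) (O : Subgroup G')
    (hgen : ∀ a : G × G', ∃ k ∈ K, ∃ s : G, ∃ o ∈ O, a = k * (s, 1) * (1, o)) :
    Function.Surjective
      ((QuotientGroup.mk : G × G' → (G × G') ⧸ (K ⊔ (⊥ : Subgroup G).prod O)) ∘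
        inl G G') := by
  intro x
  obtain ⟨a, rfl⟩ := QuotientGroup.mk_surjective x
  obtain ⟨k, hk, s, o, ho, rfl⟩ := hgen a
  refine ⟨s, QuotientGroup.eq.2 ?_⟩
  have hquot : ((s, 1) : G × G')⁻¹ * (k * (s, 1) * (1, o)) = k * (1, o) := by
    ext <;> simp [mul_comm, mul_left_comm]
  rw [inl_apply, hquot]
  exact mul_mem (Subgroup.mem_sup_left hk)
    (Subgroup.mem_sup_right (Subgroup.mem_prod.2 ⟨Subgroup.mem_bot.2 rfl, ho⟩))

theorem isOpenMap_map_inl [TopologicalSpace G] [TopologicalSpace G'] [ContinuousMul G]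
    [ContinuousMul G'] (L : Subgroup G) (M : Subgroup (G × G')) (O : Subgroup G')
    (hO : IsOpen (O : Set G')) (hOM : (⊥ : Subgroup G).prod O ≤ M)
    (h : L ≤ M.comap (inl G G')) :
    IsOpenMap (QuotientGroup.map L M (inl G G') h) := by
  intro U hU
  have himage : QuotientGroup.map L M (inl G G') h '' U =
      (QuotientGroup.mk : G × G' → (G × G') ⧸ M) ''
        ((QuotientGroup.mk ⁻¹' U) ×ˢ (O : Set G')) := by
    ext x
    constructor
    · rintro ⟨u, hu, rfl⟩
      obtain ⟨s, rfl⟩ := QuotientGroup.mk_surjective u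
      exact ⟨(s, 1), ⟨hu, O.one_mem⟩, rfl⟩
    · rintro ⟨⟨s, o⟩, ⟨hs, ho⟩, rfl⟩
      exact ⟨s, hs, QuotientGroup.eq.2 (hOM (Subgroup.mem_prod.2
        ⟨Subgroup.mem_bot.2 (by simp), by simpa using ho⟩))⟩
  rw [himage]
  exact QuotientGroup.isOpenMap_coe _ ((hU.preimage QuotientGroup.continuous_mk).prod hO)

end Product

theorem quotient_map_homeomorph_general
    {AS AT : Type*} [CommGroup AS] [CommGroup AT]
    [TopologicalSpace AS] [IsTopologicalGroup AS]
    [TopologicalSpace AT] [IsTopologicalGroup AT]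
    (K : Subgroup (AS × AT)) (O : Subgroup AT)
    (hOopen : IsOpen (O : Set AT))
    (hgen : ∀ a : AS × AT, ∃ k ∈ K, ∃ s : AS, ∃ o ∈ O,
      a = k * (s, 1) * (1, o))
    (KS : Subgroup AS)
    (hKS : KS = Subgroup.map (MonoidHom.fst AS AT) (K ⊓ ((⊤ : Subgroup AS).prod O)))
    (N : Subgroup (AS × AT))
    (hN : N = ((⊥ : Subgroup AS).prod O))
    (hle : KS ≤ (K ⊔ N).comap (MonoidHom.inl AS AT)) :
    IsHomeomorph (QuotientGroup.map KS (K ⊔ N) (MonoidHom.inl AS AT) hle) ∧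
      ∀ (s : AS) (x : AS ⧸ KS),
        QuotientGroup.map KS (K ⊔ N) (MonoidHom.inl AS AT) hle
            ((QuotientGroup.mk s) * x)
          = (QuotientGroup.mk ((s, 1) : AS × AT))
            * QuotientGroup.map KS (K ⊔ N) (MonoidHom.inl AS AT) hle x := by
  subst hKS hN
  refine ⟨⟨?_, ?_, ?_, ?_⟩, fun s x => map_mul _ _ x⟩
  · exact QuotientGroup.continuous_map _ _ _ (continuous_id.prodMk continuous_const) hle
  · exact isOpenMap_map_inl _ _ O hOopen le_sup_right hle
  · exact QuotientGroup.map_injective_of_comap_le _ _ _ hle (comap_inl_sup_bot_prod_le K O)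
  · exact QuotientGroup.map_surjective_of_surjective (N := _) _ _
      (mk_comp_inl_surjective K O hgen) hle

/-- Topological version: with `A = A_S × A_T` a locally compact abelian
topological group, `O ≤ A_T` compact open, `K` discrete with
`A = K · (A_S × {1}) · ({1} × O)`, the natural map
`α : K_S\A_S → K\A/O` is a homeomorphism (continuous, open, bijective) and is
equivariant for the translation action of `A_S`. -/
theorem quotient_map_homeomorph
    {AS AT : Type*} [CommGroup AS] [CommGroup AT]
    [TopologicalSpace AS] [IsTopologicalGroup AS] [LocallyCompactSpace AS]
    [TopologicalSpace AT] [IsTopologicalGroup AT] [LocallyCompactSpace AT]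
    (K : Subgroup (AS × AT)) (O : Subgroup AT)
    (hKdiscrete : DiscreteTopology K)
    (hOcompact : IsCompact (O : Set AT)) (hOopen : IsOpen (O : Set AT))
    (hgen : ∀ a : AS × AT, ∃ k ∈ K, ∃ s : AS, ∃ o ∈ O,
      a = k * (s, 1) * (1, o))
    (KS : Subgroup AS)
    (hKS : KS = Subgroup.map (MonoidHom.fst AS AT) (K ⊓ ((⊤ : Subgroup AS).prod O)))
    (N : Subgroup (AS × AT))
    (hN : N = ((⊥ : Subgroup AS).prod O))
    (hle : KS ≤ (K ⊔ N).comap (MonoidHom.inl AS AT)) :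
    IsHomeomorph (QuotientGroup.map KS (K ⊔ N) (MonoidHom.inl AS AT) hle) ∧
      ∀ (s : AS) (x : AS ⧸ KS),
        QuotientGroup.map KS (K ⊔ N) (MonoidHom.inl AS AT) hle
            ((QuotientGroup.mk s) * x)
          = (QuotientGroup.mk ((s, 1) : AS × AT))
            * QuotientGroup.map KS (K ⊔ N) (MonoidHom.inl AS AT) hle x :=
  quotient_map_homeomorph_general K O hOopen hgen KS hKS N hN hle
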